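/- arXiv:0708.2044 — 7 statements merged into one kernel-verified Lean document; each statement's English description precedes it below -/
import Mathlib

section
/- Let k ≥ 1 and let λ, μ : ℝ^k → ℝ^k be bounded Lipschitz functions with nonnegative components such that λ_i(x) > 0 and μ_i(x) > 0 for every x ∈ [0,1]^k and every i. If x : [0,∞) → ℝ^k satisfies x(0) = x⁰ ∈ (0,1)^k and x'(t) = V(x(t)) for all t ≥ 0, where V is the clamped drift field associated to (λ, μ), then x(t) ∈ (0,1)^k for all t ≥ 0. -/
/-- Clamp a real number to the interval `[0,1]`. -/
noncomputable def clamp (t : ℝ) : ℝ := min (max t 0) 1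

/-- The clamped drift field `V` associated to the pair `(lam, mu)`:
`V_i(x) = (1 − clamp(x_i)) λ_i(x) − clamp(x_i) μ_i(x)`. -/
noncomputable def driftV {k : ℕ} (lam mu : (Fin k → ℝ) → Fin k → ℝ)
    (x : Fin k → ℝ) : Fin k → ℝ :=
  fun i => (1 - clamp (x i)) * lam x i - clamp (x i) * mu x i

/-- If `λ_i, μ_i > 0` on the closed cube, then any solution of `x' = V(x)` starting
in the open cube `(0,1)^k` stays in `(0,1)^k` for all `t ≥ 0`. -/
theorem statement1 (k : ℕ) (hk : 1 ≤ k)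
    (lam mu : (Fin k → ℝ) → Fin k → ℝ)
    (Klam Kmu : NNReal)
    (hlamLip : LipschitzWith Klam lam) (hmuLip : LipschitzWith Kmu mu)
    (Clam Cmu : ℝ)
    (hlamBdd : ∀ x i, lam x i ≤ Clam) (hmuBdd : ∀ x i, mu x i ≤ Cmu)
    (hlamNonneg : ∀ x i, 0 ≤ lam x i) (hmuNonneg : ∀ x i, 0 ≤ mu x i)
    (hlamPos : ∀ x : Fin k → ℝ, (∀ i, x i ∈ Set.Icc (0 : ℝ) 1) → ∀ i, 0 < lam x i)
    (hmuPos : ∀ x : Fin k → ℝ, (∀ i, x i ∈ Set.Icc (0 : ℝ) 1) → ∀ i, 0 < mu x i)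
    (x0 : Fin k → ℝ) (hx0 : ∀ i, x0 i ∈ Set.Ioo (0 : ℝ) 1)
    (x : ℝ → (Fin k → ℝ)) (hxinit : x 0 = x0)
    (hxode : ∀ t ∈ Set.Ici (0 : ℝ),
      HasDerivWithinAt x (driftV lam mu (x t)) (Set.Ici 0) t) :
    ∀ t ∈ Set.Ici (0 : ℝ), ∀ i, x t i ∈ Set.Ioo (0 : ℝ) 1 := by
  have hcont : ∀ t ∈ Set.Ici (0:ℝ), ContinuousWithinAt x (Set.Ici 0) t :=
    fun t ht => (hxode t ht).continuousWithinAt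
  by_contra hcon
  push_neg at hcon
  obtain ⟨t₀, ht₀, i₀, hi₀⟩ := hcon
  set B : Set ℝ := {t | t ∈ Set.Ici (0:ℝ) ∧ ∃ i, x t i ∉ Set.Ioo (0:ℝ) 1} with hBdef
  have hBne : B.Nonempty := ⟨t₀, ht₀, i₀, hi₀⟩
  have hBbdd : BddBelow B := ⟨0, fun t ht => ht.1⟩
  set T := sInf B with hTdef
  have hT0 : 0 ≤ T := le_csInf hBne (fun t ht => ht.1)
  have hTcl : T ∈ closure B := csInf_mem_closure hBne hBbdd
  have hUopen : IsOpen {y : Fin k → ℝ | ∀ i, y i ∈ Set.Ioo (0:ℝ) 1} := by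
    have : {y : Fin k → ℝ | ∀ i, y i ∈ Set.Ioo (0:ℝ) 1}
        = ⋂ i, (fun y : Fin k → ℝ => y i) ⁻¹' Set.Ioo (0:ℝ) 1 := by
      ext y; simp
    rw [this]
    exact isOpen_iInter_of_finite fun i => isOpen_Ioo.preimage (continuous_apply i)
  -- T itself is a bad time
  have hTB : ∃ i, x T i ∉ Set.Ioo (0:ℝ) 1 := by
    by_contra h
    push_neg at h
    have hmem : {t | ∀ i, x t i ∈ Set.Ioo (0:ℝ) 1} ∈ nhdsWithin T (Set.Ici 0) :=
      (hcont T hT0) (hUopen.mem_nhds h)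
    haveI hne : (nhdsWithin T B).NeBot := mem_closure_iff_nhdsWithin_neBot.mp hTcl
    have hle : nhdsWithin T B ≤ nhdsWithin T (Set.Ici 0) :=
      nhdsWithin_mono T (fun t ht => ht.1)
    have h1 : {t | ∀ i, x t i ∈ Set.Ioo (0:ℝ) 1} ∈ nhdsWithin T B := hle hmem
    obtain ⟨s, hs1, hs2⟩ :=
      Filter.nonempty_of_mem (Filter.inter_mem h1 (self_mem_nhdsWithin (a := T) (s := B)))
    obtain ⟨i, hi⟩ := hs2.2
    exact hi (hs1 i)
  obtain ⟨i, hiT⟩ := hTB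
  -- T > 0
  have hTpos : 0 < T := by
    rcases hT0.lt_or_eq with h | h
    · exact h
    · exfalso; apply hiT; rw [← h, hxinit]; exact hx0 i
  -- times before T are good
  have hgood : ∀ s ∈ Set.Ico (0:ℝ) T, ∀ j, x s j ∈ Set.Ioo (0:ℝ) 1 := by
    intro s hs j
    by_contra hbad
    have : s ∈ B := ⟨hs.1, j, hbad⟩
    exact absurd (csInf_le hBbdd this) (not_le.mpr hs.2)
  have hclIco : T ∈ closure (Set.Ico (0:ℝ) T) := by
    rw [closure_Ico hTpos.ne]
    exact Set.right_mem_Icc.mpr hT0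
  -- x T is in the closed cube
  have hcube : ∀ j, x T j ∈ Set.Icc (0:ℝ) 1 := by
    intro j
    have hcj : ContinuousWithinAt (fun t => x t j) (Set.Ico 0 T) T :=
      ((continuous_apply j).continuousAt.comp_continuousWithinAt
        ((hcont T hT0).mono Set.Ico_subset_Ici_self))
    have := hcj.mem_closure hclIco (fun s hs => (hgood s hs j : _))
    rwa [closure_Ioo (by norm_num : (0:ℝ) ≠ 1)] at this
  -- the derivative of coordinate i at T, within Icc 0 T
  have hdi : HasDerivWithinAt (fun t => x t i) (driftV lam mu (x T) i)
      (Set.Icc 0 T) T :=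
    ((hasDerivWithinAt_pi.mp (hxode T hT0)) i).mono Set.Icc_subset_Ici_self
  have hslope : Filter.Tendsto (slope (fun t => x t i) T)
      (nhdsWithin T (Set.Icc 0 T \ {T})) (nhds (driftV lam mu (x T) i)) :=
    hasDerivWithinAt_iff_tendsto_slope.mp hdi
  have hdiffeq : Set.Icc (0:ℝ) T \ {T} = Set.Ico 0 T := by
    ext s
    simp only [Set.mem_diff, Set.mem_Icc, Set.mem_Ico, Set.mem_singleton_iff]
    constructor
    · rintro ⟨⟨h1, h2⟩, h3⟩; exact ⟨h1, lt_of_le_of_ne h2 h3⟩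
    · rintro ⟨h1, h2⟩; exact ⟨⟨h1, h2.le⟩, h2.ne⟩
  rw [hdiffeq] at hslope
  haveI : (nhdsWithin T (Set.Ico 0 T)).NeBot :=
    mem_closure_iff_nhdsWithin_neBot.mp hclIco
  -- split by whether x T i = 0 or 1
  rcases (Set.mem_Icc.mp (hcube i)) with ⟨h0, h1⟩
  have hnotIoo : x T i ≤ 0 ∨ 1 ≤ x T i := by
    by_contra h
    push_neg at h
    exact hiT ⟨lt_of_le_of_ne h0 (by intro e; exact absurd e.symm (ne_of_lt h.1).symm), h.2⟩
  rcases hnotIoo with hc | hc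
  · -- x T i = 0
    have hzero : x T i = 0 := le_antisymm hc h0
    have hv : driftV lam mu (x T) i = lam (x T) i := by
      simp [driftV, clamp, hzero]
    have hvpos : 0 < driftV lam mu (x T) i := hv ▸ hlamPos (x T) hcube i
    have hev : ∀ᶠ s in nhdsWithin T (Set.Ico 0 T),
        0 < slope (fun t => x t i) T s := hslope.eventually (eventually_gt_nhds hvpos)
    obtain ⟨s, hsl, hs⟩ := (hev.and eventually_mem_nhdsWithin).exists
    have hsT : s - T < 0 := sub_neg.mpr hs.2
    have hnum : x s i - x T i < 0 := by
      rcases (div_pos_iff.mp (by rwa [slope_def_field] at hsl)) with h | h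
      · exact absurd h.2 (not_lt.mpr hsT.le)
      · exact h.1
    have : x s i < 0 := by rw [hzero] at hnum; linarith
    exact absurd this (not_lt.mpr (hgood s hs i).1.le)
  · -- x T i = 1
    have hone : x T i = 1 := le_antisymm h1 hc
    have hv : driftV lam mu (x T) i = -(mu (x T) i) := by
      simp [driftV, clamp, hone]
    have hvneg : driftV lam mu (x T) i < 0 := by
      rw [hv]; simpa using hmuPos (x T) hcube i
    have hev : ∀ᶠ s in nhdsWithin T (Set.Ico 0 T),
        slope (fun t => x t i) T s < 0 := hslope.eventually (eventually_lt_nhds hvneg)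
    obtain ⟨s, hsl, hs⟩ := (hev.and eventually_mem_nhdsWithin).exists
    have hsT : s - T < 0 := sub_neg.mpr hs.2
    have hnum : 0 < x s i - x T i := by
      rcases (div_neg_iff.mp (by rwa [slope_def_field] at hsl)) with h | h
      · exact h.1
      · exact absurd h.2 (not_lt.mpr hsT.le)
    have : 1 < x s i := by rw [hone] at hnum; linarith
    exact absurd this (not_lt.mpr (hgood s hs i).2.le)
end

section
/- Let k ≥ 1, let λ, μ : ℝ^k → ℝ^k be bounded Lipschitz functions with nonnegative components, and let x : [0,∞) → ℝ^k be the solution of x'(t) = V(x(t)) with x(0) = x⁰ ∈ (0,1)^k, where V is the clamped drift field associated to (λ, μ). Fix a coordinate i ∈ {1,…,k}. If p : [0,∞) → ℝ is differentiable, satisfies the time-dependent linear ODE p'(t) = (1 − p(t)) λ_i(x(t)) − p(t) μ_i(x(t)) for all t ≥ 0, and p(0) equals the i-th coordinate of x⁰, then p(t) equals the i-th coordinate of x(t) for all t ≥ 0. -/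
open Set

lemma clamp_eq_self {t : ℝ} (h : t ∈ Icc (0 : ℝ) 1) : clamp t = t := by
  rw [clamp, max_eq_left h.1, min_eq_left h.2]

lemma lipschitzWith_one_clamp : LipschitzWith 1 clamp :=
  (LipschitzWith.id.max_const 0).min_const 1

/-- The slack `ε (1 + (t - t₀))` added to the barrier `c` makes the sign condition strict, as
the fencing theorem requires. -/
lemma image_le_of_deriv_right_nonpos_above {f f' : ℝ → ℝ} {t₀ c : ℝ}
    (hf : ∀ t ∈ Ici t₀, HasDerivWithinAt f (f' t) (Ici t₀) t) (h₀ : f t₀ ≤ c)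
    (hc : ∀ t ∈ Ici t₀, c ≤ f t → f' t ≤ 0) :
    ∀ t ∈ Ici t₀, f t ≤ c := by
  intro T hT
  have hfence : ∀ ε > 0, f T ≤ c + ε * (1 + (T - t₀)) := by
    intro ε hε
    refine image_le_of_deriv_right_lt_deriv_boundary
      (B := fun t => c + ε * (1 + (t - t₀))) (B' := fun _ => ε)
      (fun t ht => (hf t ht.1).continuousWithinAt.mono Icc_subset_Ici_self)
      (fun t ht => (hf t ht.1).mono (Ici_subset_Ici.2 ht.1))
      (by rw [sub_self, add_zero, mul_one]; linarith)
      (fun t => by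
        simpa only [mul_one] using
          (((hasDerivAt_id' t).sub_const t₀).const_add 1).const_mul ε |>.const_add c)
      ?_ ⟨hT, le_rfl⟩
    intro t ht heq
    have hct : c ≤ f t := heq ▸ le_add_of_nonneg_right
      (mul_nonneg hε.le (by linarith [ht.1]))
    exact (hc t ht.1 hct).trans_lt hε
  refine le_of_forall_pos_le_add fun δ hδ => ?_
  have hpos : 0 < 1 + (T - t₀) := by linarith [mem_Ici.1 hT]
  simpa only [div_mul_cancel₀ δ hpos.ne'] using hfence (δ / (1 + (T - t₀))) (div_pos hδ hpos)

lemma mem_Icc_of_hasDerivWithinAt_kolmogorov {a b p : ℝ → ℝ} {t₀ : ℝ}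
    (ha : ∀ t ∈ Ici t₀, 0 ≤ a t) (hb : ∀ t ∈ Ici t₀, 0 ≤ b t)
    (hp : ∀ t ∈ Ici t₀, HasDerivWithinAt p ((1 - p t) * a t - p t * b t) (Ici t₀) t)
    (hp₀ : p t₀ ∈ Icc (0 : ℝ) 1) :
    ∀ t ∈ Ici t₀, p t ∈ Icc (0 : ℝ) 1 := by
  have hle : ∀ t ∈ Ici t₀, p t ≤ 1 :=
    image_le_of_deriv_right_nonpos_above hp hp₀.2 fun t ht h1 => by
      nlinarith [ha t ht, hb t ht]
  have hge : ∀ t ∈ Ici t₀, -p t ≤ 0 :=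
    image_le_of_deriv_right_nonpos_above (fun t ht => (hp t ht).neg) (by linarith [hp₀.1])
      fun t ht h0 => by nlinarith [ha t ht, hb t ht]
  exact fun t ht => ⟨neg_nonpos.1 (hge t ht), hle t ht⟩

noncomputable def clampedField (a b : ℝ → ℝ) (t y : ℝ) : ℝ :=
  (1 - clamp y) * a t - clamp y * b t

lemma lipschitzWith_clampedField {a b : ℝ → ℝ} {t : ℝ} {K : NNReal}
    (ha : 0 ≤ a t) (hb : 0 ≤ b t) (hK : a t + b t ≤ K) :
    LipschitzWith K (clampedField a b t) := by
  refine LipschitzWith.of_dist_le_mul fun y z => ?_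
  have hclamp : |clamp z - clamp y| ≤ |z - y| := by
    simpa [Real.dist_eq] using lipschitzWith_one_clamp.dist_le_mul z y
  calc dist (clampedField a b t y) (clampedField a b t z)
      = (a t + b t) * |clamp z - clamp y| := by
        rw [Real.dist_eq, clampedField, clampedField, ← abs_of_nonneg (add_nonneg ha hb),
          ← abs_mul]
        congr 1
        ring
    _ ≤ K * dist y z := by
        rw [Real.dist_eq, abs_sub_comm y z]
        exact mul_le_mul hK hclamp (abs_nonneg _) (by positivity)

lemma ODE_solution_unique_Ici {E : Type*} [NormedAddCommGroup E] [NormedSpace ℝ E]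
    {v : ℝ → E → E} {K : NNReal} {f g : ℝ → E} {t₀ : ℝ}
    (hv : ∀ t, LipschitzWith K (v t))
    (hf : ∀ t ∈ Ici t₀, HasDerivWithinAt f (v t (f t)) (Ici t₀) t)
    (hg : ∀ t ∈ Ici t₀, HasDerivWithinAt g (v t (g t)) (Ici t₀) t)
    (h₀ : f t₀ = g t₀) :
    EqOn f g (Ici t₀) := fun T hT =>
  ODE_solution_unique (a := t₀) (b := T) hv
    (fun t ht => (hf t ht.1).continuousWithinAt.mono Icc_subset_Ici_self)
    (fun t ht => (hf t ht.1).mono (Ici_subset_Ici.2 ht.1))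
    (fun t ht => (hg t ht.1).continuousWithinAt.mono Icc_subset_Ici_self)
    (fun t ht => (hg t ht.1).mono (Ici_subset_Ici.2 ht.1)) h₀ ⟨hT, le_rfl⟩

theorem statement2_general (k : ℕ)
    (lam mu : (Fin k → ℝ) → Fin k → ℝ)
    (Clam Cmu : ℝ)
    (hlamBdd : ∀ x i, lam x i ≤ Clam) (hmuBdd : ∀ x i, mu x i ≤ Cmu)
    (hlamNonneg : ∀ x i, 0 ≤ lam x i) (hmuNonneg : ∀ x i, 0 ≤ mu x i)
    (x0 : Fin k → ℝ) (hx0 : ∀ i, x0 i ∈ Set.Ioo (0 : ℝ) 1)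
    (x : ℝ → (Fin k → ℝ)) (hxinit : x 0 = x0)
    (hxode : ∀ t ∈ Set.Ici (0 : ℝ),
      HasDerivWithinAt x (driftV lam mu (x t)) (Set.Ici 0) t)
    (i : Fin k)
    (p : ℝ → ℝ)
    (hpode : ∀ t ∈ Set.Ici (0 : ℝ),
      HasDerivWithinAt p ((1 - p t) * lam (x t) i - p t * mu (x t) i) (Set.Ici 0) t)
    (hpinit : p 0 = x0 i) :
    ∀ t ∈ Set.Ici (0 : ℝ), p t = x t i := by
  set a : ℝ → ℝ := fun t => lam (x t) i
  set b : ℝ → ℝ := fun t => mu (x t) i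
  have hv : ∀ t, LipschitzWith (Clam + Cmu).toNNReal (clampedField a b t) := fun t =>
    lipschitzWith_clampedField (hlamNonneg _ _) (hmuNonneg _ _)
      ((add_le_add (hlamBdd _ _) (hmuBdd _ _)).trans (Real.le_coe_toNNReal _))
  have hp01 : ∀ t ∈ Ici (0 : ℝ), p t ∈ Icc (0 : ℝ) 1 :=
    mem_Icc_of_hasDerivWithinAt_kolmogorov (fun _ _ => hlamNonneg _ _)
      (fun _ _ => hmuNonneg _ _) hpode (hpinit ▸ Ioo_subset_Icc_self (hx0 i))
  have hp : ∀ t ∈ Ici (0 : ℝ), HasDerivWithinAt p (clampedField a b t (p t)) (Ici 0) t :=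
    fun t ht => by simpa only [clampedField, clamp_eq_self (hp01 t ht)] using hpode t ht
  have hxi : ∀ t ∈ Ici (0 : ℝ),
      HasDerivWithinAt (fun s => x s i) (clampedField a b t (x t i)) (Ici 0) t :=
    fun t ht => hasDerivWithinAt_pi.1 (hxode t ht) i
  exact ODE_solution_unique_Ici hv hp hxi (by rw [hpinit, hxinit])

/-- Kolmogorov-equation identity: if `p` solves the time-dependent linear ODE
`p' = (1 − p) λ_i(x_t) − p μ_i(x_t)` with `p(0) = (x⁰)_i`, where `x` is the
solution of `x' = V(x)` with `x(0) = x⁰ ∈ (0,1)^k`, then `p(t) = (x_t)_i` for all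
`t ≥ 0`. -/
theorem statement2 (k : ℕ) (hk : 1 ≤ k)
    (lam mu : (Fin k → ℝ) → Fin k → ℝ)
    (Klam Kmu : NNReal)
    (hlamLip : LipschitzWith Klam lam) (hmuLip : LipschitzWith Kmu mu)
    (Clam Cmu : ℝ)
    (hlamBdd : ∀ x i, lam x i ≤ Clam) (hmuBdd : ∀ x i, mu x i ≤ Cmu)
    (hlamNonneg : ∀ x i, 0 ≤ lam x i) (hmuNonneg : ∀ x i, 0 ≤ mu x i)
    (x0 : Fin k → ℝ) (hx0 : ∀ i, x0 i ∈ Set.Ioo (0 : ℝ) 1)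
    (x : ℝ → (Fin k → ℝ)) (hxinit : x 0 = x0)
    (hxode : ∀ t ∈ Set.Ici (0 : ℝ),
      HasDerivWithinAt x (driftV lam mu (x t)) (Set.Ici 0) t)
    (i : Fin k)
    (p : ℝ → ℝ)
    (hpode : ∀ t ∈ Set.Ici (0 : ℝ),
      HasDerivWithinAt p ((1 - p t) * lam (x t) i - p t * mu (x t) i) (Set.Ici 0) t)
    (hpinit : p 0 = x0 i) :
    ∀ t ∈ Set.Ici (0 : ℝ), p t = x t i :=
  statement2_general k lam mu Clam Cmu hlamBdd hmuBdd hlamNonneg hmuNonneg x0 hx0 x hxinit hxode i p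
    hpode hpinit
end

section
/- Let n ≥ 1 and Q ≥ 1 be integers and let G_1, …, G_Q be independent random variables, each distributed as the sum of n independent exponential(1) random variables (i.e. Gamma(n,1)). Let T > 0 satisfy T ≤ (1/2) ∑_{l=1}^{Q} 1/(l+1). Then P( ∑_{l=1}^{Q} G_l / ((l+1) n) < T ) ≤ Q · exp(−(log 2 − 1/2) n). -/
/-!
On `{x < c}` with `r ≤ s`, the Gamma(a, r) density is at most `(r/s)^a e^{(s-r)c}` times the
Gamma(a, s) density, which integrates to one; with `a = n`, `r = 1`, `s = 2`, `c = n/2` this gives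
`P(G < n/2) ≤ 2^{-n} e^{n/2}` for `G ~ Gamma(n, 1)`. If every `G_l ≥ n/2`, the weighted sum is at
least `(1/2) ∑ 1/(l+1) ≥ T`, so the event forces some `G_l < n/2`, and a union bound concludes.
-/

open MeasureTheory ProbabilityTheory Set Real

lemma gammaPDFReal_le_mul_gammaPDFReal {a r s c x : ℝ} (ha : 0 < a) (hr : 0 < r) (hrs : r ≤ s)
    (hxc : x ≤ c) :
    gammaPDFReal a r x ≤ (r / s) ^ a * exp ((s - r) * c) * gammaPDFReal a s x := by
  have hs : 0 < s := hr.trans_le hrs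
  rcases lt_or_ge x 0 with hx | hx
  · simp [gammaPDFReal, not_le.mpr hx]
  have hrate : r ^ a = (r / s) ^ a * s ^ a := by
    rw [div_rpow hr.le hs.le, div_mul_cancel₀ _ (rpow_pos_of_pos hs a).ne']
  have hexp : exp (-(r * x)) ≤ exp ((s - r) * c) * exp (-(s * x)) := by
    rw [← exp_add, exp_le_exp]
    nlinarith
  have hfactor : 0 ≤ (r / s) ^ a * s ^ a / Gamma a * x ^ (a - 1) := by
    have := Gamma_pos_of_pos ha
    positivity
  simp only [gammaPDFReal, if_pos hx, hrate]
  calc (r / s) ^ a * s ^ a / Gamma a * x ^ (a - 1) * exp (-(r * x))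
      ≤ (r / s) ^ a * s ^ a / Gamma a * x ^ (a - 1) * (exp ((s - r) * c) * exp (-(s * x))) :=
        mul_le_mul_of_nonneg_left hexp hfactor
    _ = _ := by ring

lemma gammaMeasure_Iio_le {a r s : ℝ} (ha : 0 < a) (hr : 0 < r) (hrs : r ≤ s) (c : ℝ) :
    gammaMeasure a r (Iio c) ≤ ENNReal.ofReal ((r / s) ^ a * exp ((s - r) * c)) := by
  have hs : 0 < s := hr.trans_le hrs
  set K := (r / s) ^ a * exp ((s - r) * c)
  have hK : 0 ≤ K := by positivity
  have hdensity : ∀ x ∈ Iio c, gammaPDF a r x ≤ ENNReal.ofReal K * gammaPDF a s x := by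
    intro x hx
    rw [gammaPDF, gammaPDF, ← ENNReal.ofReal_mul hK]
    exact ENNReal.ofReal_le_ofReal (gammaPDFReal_le_mul_gammaPDFReal ha hr hrs (le_of_lt hx))
  have hmeas : Measurable (gammaPDF a s) := (measurable_gammaPDFReal a s).ennreal_ofReal
  rw [gammaMeasure, withDensity_apply _ measurableSet_Iio]
  calc ∫⁻ x in Iio c, gammaPDF a r x
      ≤ ∫⁻ x in Iio c, ENNReal.ofReal K * gammaPDF a s x :=
        setLIntegral_mono (hmeas.const_mul _) hdensity
    _ ≤ ∫⁻ x, ENNReal.ofReal K * gammaPDF a s x := setLIntegral_le_lintegral _ _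
    _ = ENNReal.ofReal K := by
        rw [lintegral_const_mul _ hmeas, lintegral_gammaPDF_eq_one ha hs, mul_one]

lemma gammaMeasure_Iio_half_le {n : ℕ} (hn : 1 ≤ n) :
    gammaMeasure n 1 (Iio ((n : ℝ) / 2)) ≤
      ENNReal.ofReal (exp (-(log 2 - 1 / 2) * n)) := by
  have hbound := gammaMeasure_Iio_le (a := n) (by exact_mod_cast hn) one_pos one_le_two
    ((n : ℝ) / 2)
  convert hbound using 2
  rw [rpow_def_of_pos (by norm_num), ← exp_add, one_div, log_inv]
  ring_nf

lemma exists_lt_half_of_sum_div_lt {ι : Type*} {s : Finset ι} {g w : ι → ℝ} {m T : ℝ}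
    (hm : 0 < m) (hw : ∀ l ∈ s, 0 < w l) (hT : T ≤ 1 / 2 * ∑ l ∈ s, 1 / w l)
    (hsum : ∑ l ∈ s, g l / (w l * m) < T) :
    ∃ l ∈ s, g l < m / 2 := by
  have hhalf : 1 / 2 * ∑ l ∈ s, 1 / w l = ∑ l ∈ s, m / 2 / (w l * m) := by
    rw [Finset.mul_sum]
    refine Finset.sum_congr rfl fun l hl => ?_
    field_simp [(hw l hl).ne']
  obtain ⟨l, hl, hlt⟩ := Finset.exists_lt_of_sum_lt (hsum.trans_le (hT.trans_eq hhalf))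
  exact ⟨l, hl, (div_lt_div_iff_of_pos_right (mul_pos (hw l hl) hm)).mp hlt⟩

theorem statement5_general {Ω : Type*} [MeasurableSpace Ω]
    (P : Measure Ω) [IsProbabilityMeasure P]
    (n Q : ℕ) (hn : 1 ≤ n)
    (G : ℕ → Ω → ℝ)
    (hmeas : ∀ l, Measurable (G l))
    (hdist : ∀ l ∈ Finset.Icc 1 Q, Measure.map (G l) P = gammaMeasure n 1)
    (T : ℝ)
    (hT2 : T ≤ (1 / 2) * ∑ l ∈ Finset.Icc 1 Q, (1 : ℝ) / (l + 1)) :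
    P {ω | ∑ l ∈ Finset.Icc 1 Q, G l ω / ((l + 1) * n) < T} ≤
      ENNReal.ofReal (Q * Real.exp (-(Real.log 2 - 1 / 2) * n)) := by
  have hevent : {ω | ∑ l ∈ Finset.Icc 1 Q, G l ω / ((l + 1) * n) < T} ⊆
      ⋃ l ∈ Finset.Icc 1 Q, G l ⁻¹' Iio ((n : ℝ) / 2) := fun ω hω => by
    simpa using exists_lt_half_of_sum_div_lt (by positivity) (fun l _ => by positivity)
      hT2 hω
  calc P {ω | ∑ l ∈ Finset.Icc 1 Q, G l ω / ((l + 1) * n) < T}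
      ≤ ∑ l ∈ Finset.Icc 1 Q, P (G l ⁻¹' Iio ((n : ℝ) / 2)) :=
        (measure_mono hevent).trans (measure_biUnion_finset_le _ _)
    _ = ∑ l ∈ Finset.Icc 1 Q, gammaMeasure n 1 (Iio ((n : ℝ) / 2)) :=
        Finset.sum_congr rfl fun l hl => by
          rw [← Measure.map_apply (hmeas l) measurableSet_Iio, hdist l hl]
    _ ≤ ∑ _l ∈ Finset.Icc 1 Q, ENNReal.ofReal (exp (-(log 2 - 1 / 2) * n)) :=
        Finset.sum_le_sum fun _ _ => gammaMeasure_Iio_half_le hn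
    _ = ENNReal.ofReal (Q * exp (-(log 2 - 1 / 2) * n)) := by
        rw [Finset.sum_const, Nat.card_Icc, Nat.add_sub_cancel, nsmul_eq_mul,
          ENNReal.ofReal_mul (Nat.cast_nonneg Q), ENNReal.ofReal_natCast]

/-- If `G₁, …, G_Q` are independent Gamma(n,1) random variables and
`T ≤ (1/2) ∑_{l=1}^{Q} 1/(l+1)`, then
`P( ∑_{l=1}^{Q} G_l / ((l+1) n) < T ) ≤ Q exp(−(log 2 − 1/2) n)`. -/
theorem statement5 {Ω : Type*} [MeasurableSpace Ω]
    (P : Measure Ω) [IsProbabilityMeasure P]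
    (n Q : ℕ) (hn : 1 ≤ n) (hQ : 1 ≤ Q)
    (G : ℕ → Ω → ℝ)
    (hmeas : ∀ l, Measurable (G l))
    (hindep : iIndepFun G P)
    (hdist : ∀ l ∈ Finset.Icc 1 Q, Measure.map (G l) P = gammaMeasure n 1)
    (T : ℝ) (hT : 0 < T)
    (hT2 : T ≤ (1 / 2) * ∑ l ∈ Finset.Icc 1 Q, (1 : ℝ) / (l + 1)) :
    P {ω | ∑ l ∈ Finset.Icc 1 Q, G l ω / ((l + 1) * n) < T} ≤
      ENNReal.ofReal (Q * Real.exp (-(Real.log 2 - 1 / 2) * n)) :=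
  statement5_general P n Q hn G hmeas hdist T hT2
end

section
/- Let k ≥ 2, J > 0 and s : ZMod k → {−1,+1}, and let A be the k × k real matrix with A_{ii} = −2, A_{i, c(i)} = s_i J (where c(i) = i+1 mod k) and all other entries 0. Then a complex number z is an eigenvalue of A (viewed as a complex matrix) if and only if (z + 2)^k = (∏_{i} s_i) · J^k. Equivalently, the eigenvalues of A are exactly the numbers J ζ − 2 where ζ ranges over the complex k-th roots of ∏_i s_i. -/
/-!
With weights `c i = s i * J`, the complexified matrix is `S - 2`, where `S` is the weighted cyclic
shift `(S v) i = c i * v (i + 1)`. Iterating the eigenvector equation `c i * v (i + 1) = μ * v i`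
once around the cycle gives `μ ^ k * v i = (∏ c) * v i`, so `μ ^ k = ∏ c`. Conversely, if
`μ ^ k = ∏ c ≠ 0`, the sequence `w m = μ ^ m / (c 0 ⋯ c (m - 1))` satisfies the recurrence and is
`k`-periodic, so it descends to an eigenvector on `ZMod k`; if `∏ c = 0`, then `μ = 0` and the basis
vector at `i + 1` for some `c i = 0` lies in the kernel of `S`.
-/

/-- The Jacobian matrix at `(1/2,…,1/2)` of the cyclic-interaction field:
`A_{ii} = −2`, `A_{i,i+1} = s_i J`, all other entries `0`. -/
noncomputable def cycA (k : ℕ) (J : ℝ) (s : ZMod k → ℝ) :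
    Matrix (ZMod k) (ZMod k) ℝ :=
  Matrix.of fun i j => if j = i then -2 else if j = i + 1 then s i * J else 0

open Module.End Matrix Finset

theorem Matrix.hasEigenvalue_toLin'_iff {R ι : Type*} [CommRing R] [Fintype ι] [DecidableEq ι]
    (M : Matrix ι ι R) (μ : R) :
    HasEigenvalue (toLin' M) μ ↔ ∃ v ≠ 0, M *ᵥ v = μ • v := by
  simp only [hasEigenvalue_iff, Submodule.ne_bot_iff, mem_eigenspace_iff, toLin'_apply]
  exact ⟨fun ⟨v, hv, h0⟩ => ⟨v, h0, hv⟩, fun ⟨v, h0, hv⟩ => ⟨v, hv, h0⟩⟩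

variable {n : ℕ} [NeZero n]

theorem prod_range_add_natCast {M : Type*} [CommMonoid M] (f : ZMod n → M) (a : ZMod n) :
    ∏ l ∈ range n, f (a + l) = ∏ i, f i := by
  calc ∏ l ∈ range n, f (a + l) = ∏ i, f (a + i) :=
        prod_nbij' (fun l => (l : ZMod n)) ZMod.val (by simp) (by simp [ZMod.val_lt])
          (fun l hl => ZMod.val_cast_of_lt (mem_range.1 hl)) (fun i _ => ZMod.natCast_zmod_val i)
          (fun _ _ => rfl)
    _ = ∏ i, f i := Equiv.prod_comp (Equiv.addLeft a) f

section CommRing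

variable {R : Type*} [CommRing R]

def cyclicShift (c : ZMod n → R) : Matrix (ZMod n) (ZMod n) R :=
  Matrix.of fun i j => if j = i + 1 then c i else 0

theorem cyclicShift_mulVec (c v : ZMod n → R) (i : ZMod n) :
    (cyclicShift c *ᵥ v) i = c i * v (i + 1) := by
  simp [cyclicShift, mulVec, dotProduct, ite_mul]

theorem pow_mul_eq_prod_mul_of_mulVec_cyclicShift {c v : ZMod n → R} {μ : R}
    (h : cyclicShift c *ᵥ v = μ • v) (m : ℕ) (i : ZMod n) :
    μ ^ m * v i = (∏ l ∈ range m, c (i + l)) * v (i + m) := by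
  induction m generalizing i with
  | zero => simp
  | succ m ih =>
    have hi : c i * v (i + 1) = μ * v i := by
      rw [← cyclicShift_mulVec, h, Pi.smul_apply, smul_eq_mul]
    rw [prod_range_succ', pow_succ, mul_assoc, ← hi, mul_left_comm, ih]
    simp only [Nat.cast_succ, Nat.cast_zero, add_zero, ← add_assoc, add_right_comm i 1]
    ring

theorem mulVec_cyclicShift_eq_smul_of_periodic {c : ZMod n → R} {μ : R} {w : ℕ → R}
    (hw : Function.Periodic w n) (hrec : ∀ m : ℕ, c m * w (m + 1) = μ * w m) :
    cyclicShift c *ᵥ (fun i => w i.val) = μ • fun i => w i.val := by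
  ext i
  have hval : w (i + 1).val = w (i.val + 1) := by
    rw [← hw.map_mod_nat (i.val + 1), ← ZMod.val_natCast, Nat.cast_succ, ZMod.natCast_zmod_val]
  rw [cyclicShift_mulVec, Pi.smul_apply, smul_eq_mul, hval, ← hrec, ZMod.natCast_zmod_val]

theorem pow_eq_prod_of_hasEigenvalue_cyclicShift [IsDomain R] {c : ZMod n → R} {μ : R}
    (h : HasEigenvalue (toLin' (cyclicShift c)) μ) : μ ^ n = ∏ i, c i := by
  obtain ⟨v, hv0, hv⟩ := (hasEigenvalue_toLin'_iff _ μ).1 h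
  obtain ⟨i, hi⟩ := Function.ne_iff.1 hv0
  have := pow_mul_eq_prod_mul_of_mulVec_cyclicShift hv n i
  rw [ZMod.natCast_self, add_zero, prod_range_add_natCast] at this
  exact mul_right_cancel₀ hi this

end CommRing

variable {K : Type*} [Field K]

theorem hasEigenvalue_cyclicShift_of_pow_eq_prod {c : ZMod n → K} {μ : K}
    (h : μ ^ n = ∏ i, c i) : HasEigenvalue (toLin' (cyclicShift c)) μ := by
  rw [hasEigenvalue_toLin'_iff]
  by_cases hc : ∏ i, c i = 0
  · obtain ⟨i, -, hi⟩ := prod_eq_zero_iff.1 hc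
    refine ⟨Pi.single (i + 1) 1, Pi.single_ne_zero_iff.2 one_ne_zero, ?_⟩
    ext j
    rw [cyclicShift_mulVec, pow_eq_zero_iff (NeZero.ne n) |>.1 (h.trans hc)]
    by_cases hj : j = i
    · simp [hj, hi]
    · simp [Pi.single_apply, hj]
  · set w : ℕ → K := fun m => μ ^ m * (∏ l ∈ range m, c l)⁻¹
    have hcl : ∀ m : ℕ, c m ≠ 0 := fun m hm => hc (prod_eq_zero (mem_univ _) hm)
    have hrec : ∀ m : ℕ, c m * w (m + 1) = μ * w m := by
      intro m
      have := prod_ne_zero_iff.2 fun l (_ : l ∈ range m) => hcl l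
      have := hcl m
      simp only [w, prod_range_succ, pow_succ]
      field_simp
    have hw : Function.Periodic w n := by
      intro m
      simp only [w, pow_add, prod_range_add, Nat.cast_add]
      rw [prod_range_add_natCast, ← h, mul_inv, mul_mul_mul_comm, mul_inv_cancel₀ (h ▸ hc),
        mul_one]
    refine ⟨fun i => w i.val, Function.ne_iff.2 ⟨0, by simp [w]⟩,
      mulVec_cyclicShift_eq_smul_of_periodic hw hrec⟩

theorem hasEigenvalue_cyclicShift_iff (c : ZMod n → K) (μ : K) :
    HasEigenvalue (toLin' (cyclicShift c)) μ ↔ μ ^ n = ∏ i, c i :=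
  ⟨pow_eq_prod_of_hasEigenvalue_cyclicShift, hasEigenvalue_cyclicShift_of_pow_eq_prod⟩

theorem cycA_map_ofReal (k : ℕ) [Fact (1 < k)] (J : ℝ) (s : ZMod k → ℝ) :
    (cycA k J s).map (fun a => (a : ℂ)) = cyclicShift (fun i => (s i * J : ℂ)) + (-2 : ℂ) • 1 := by
  ext i j
  by_cases hij : j = i
  · simp [cycA, cyclicShift, hij]
  · by_cases h1 : j = i + 1 <;> simp [cycA, cyclicShift, hij, h1, Ne.symm hij]

theorem statement9_general (k : ℕ) [NeZero k] (hk : 2 ≤ k) (J : ℝ)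
    (s : ZMod k → ℝ) (z : ℂ) :
    Module.End.HasEigenvalue
      (Matrix.toLin' ((cycA k J s).map (fun a => (a : ℂ)))) z ↔
      (z + 2) ^ k = (((∏ i : ZMod k, s i) * J ^ k : ℝ) : ℂ) := by
  have : Fact (1 < k) := ⟨hk⟩
  rw [cycA_map_ofReal, map_add, map_smul, toLin'_one, hasEigenvalue_add_iff, sub_neg_eq_add,
    hasEigenvalue_cyclicShift_iff, prod_mul_distrib, prod_const, card_univ, ZMod.card]
  push_cast
  rfl

/-- A complex number `z` is an eigenvalue of `A` (viewed as a complex matrix)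
if and only if `(z + 2)^k = (∏_i s_i) J^k`. -/
theorem statement9 (k : ℕ) [NeZero k] (hk : 2 ≤ k) (J : ℝ) (hJ : 0 < J)
    (s : ZMod k → ℝ) (hs : ∀ i, s i = 1 ∨ s i = -1) (z : ℂ) :
    Module.End.HasEigenvalue
      (Matrix.toLin' ((cycA k J s).map (fun a => (a : ℂ)))) z ↔
      (z + 2) ^ k = (((∏ i : ZMod k, s i) * J ^ k : ℝ) : ℂ) :=
  statement9_general k hk J s z
end

section
/- Let k ≥ 2, J > 0 and s : ZMod k → {−1,+1} with ∏_i s_i = 1, and let A be the k × k real matrix with A_{ii} = −2, A_{i,c(i)} = s_i J (c(i) = i+1 mod k) and all other entries 0. If J < 2 then every complex eigenvalue of A has strictly negative real part; if J > 2 then J − 2 is a real eigenvalue of A with strictly positive real part. In particular, the fixed point (1/2,…,1/2) of the non-frustrated cyclic system loses linear stability exactly at J_c = 2, through a real eigenvalue crossing zero. -/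
/-!
Gershgorin's theorem puts every eigenvalue of `A` in the closed disc of radius `J` about `-2`,
which lies in the open left half-plane when `J < 2`. When `∏ sᵢ = 1` the signs are a coboundary
on the cycle: there is `v` with `v (i + 1) = v i * s i`, and since `sᵢ² = 1` this `v` is an
eigenvector of `A` for the eigenvalue `J - 2`.
-/

open Finset Matrix

theorem ZMod.prod_univ_eq_prod_range {M : Type*} [CommMonoid M] {k : ℕ} [NeZero k]
    (f : ZMod k → M) : ∏ i, f i = ∏ m ∈ range k, f m :=
  Finset.prod_nbij' (fun i => i.val) (fun m => m) (by simp [ZMod.val_lt])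
    (by simp) (by simp) (by simp +contextual [Nat.mod_eq_of_lt]) (by simp)

theorem ZMod.exists_eq_mul_of_prod_eq_one {M : Type*} [CommMonoid M] {k : ℕ} [NeZero k]
    (s : ZMod k → M) (hs : ∏ i, s i = 1) :
    ∃ v : ZMod k → M, v 0 = 1 ∧ ∀ i, v (i + 1) = v i * s i := by
  refine ⟨fun i => ∏ m ∈ range i.val, s m, by simp, fun i => ?_⟩
  have hsucc : i + 1 = ((i.val + 1 : ℕ) : ZMod k) := by push_cast; simp
  rcases (show i.val + 1 ≤ k from ZMod.val_lt i).lt_or_eq with hlt | heq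
  · simp only [hsucc, ZMod.val_cast_of_lt hlt, prod_range_succ, ZMod.natCast_val,
      ZMod.cast_id', id]
  · dsimp only
    rw [hsucc, heq, ZMod.natCast_self, ZMod.val_zero, prod_range_zero]
    calc (1 : M) = ∏ m ∈ range (i.val + 1), s m := by
          rw [heq, ← ZMod.prod_univ_eq_prod_range, hs]
      _ = _ := by rw [prod_range_succ, ZMod.natCast_zmod_val]

section
variable {k : ℕ} [NeZero k] [Fact (1 < k)] {J : ℝ} {s : ZMod k → ℝ}

theorem cycA_map_mulVec_apply (v : ZMod k → ℂ) (i : ZMod k) :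
    ((cycA k J s).map ((↑) : ℝ → ℂ) *ᵥ v) i = -2 * v i + (s i * J : ℝ) * v (i + 1) := by
  have hne : i + 1 ≠ i := by simp
  rw [Matrix.mulVec, dotProduct, ← add_sum_erase _ _ (mem_univ i),
    ← add_sum_erase _ _ (mem_erase.2 ⟨hne, mem_univ _⟩), sum_eq_zero]
  · simp [cycA, hne]
  · intro j hj
    simp only [mem_erase] at hj
    simp [cycA, hj.1, hj.2.1]

theorem cycA_map_sum_norm_erase (i : ZMod k) :
    ∑ j ∈ univ.erase i, ‖(cycA k J s).map ((↑) : ℝ → ℂ) i j‖ = |s i * J| := by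
  have hne : i + 1 ≠ i := by simp
  rw [sum_eq_single_of_mem (i + 1) (mem_erase.2 ⟨hne, mem_univ _⟩)]
  · simp [cycA, hne]
  · intro j hj hj'
    simp only [mem_erase] at hj
    simp [cycA, hj.1, hj']

theorem norm_add_two_le_of_hasEigenvalue_cycA (hJ : 0 ≤ J) (hs : ∀ i, |s i| ≤ 1) {z : ℂ}
    (hz : Module.End.HasEigenvalue (toLin' ((cycA k J s).map ((↑) : ℝ → ℂ))) z) :
    ‖z + 2‖ ≤ J := by
  obtain ⟨i, hi⟩ := eigenvalue_mem_ball hz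
  rw [cycA_map_sum_norm_erase, Metric.mem_closedBall, dist_eq_norm] at hi
  simp only [map_apply, cycA, of_apply, if_true, Complex.ofReal_neg, Complex.ofReal_ofNat,
    sub_neg_eq_add] at hi
  calc ‖z + 2‖ ≤ |s i * J| := hi
    _ = |s i| * J := by rw [abs_mul, abs_of_nonneg hJ]
    _ ≤ J := mul_le_of_le_one_left hJ (hs i)

theorem hasEigenvalue_cycA_sub_two (hs : ∀ i, s i * s i = 1) (hprod : ∏ i, s i = 1) :
    Module.End.HasEigenvalue (toLin' ((cycA k J s).map ((↑) : ℝ → ℂ))) ((J - 2 : ℝ) : ℂ) := by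
  obtain ⟨v, hv0, hv⟩ := ZMod.exists_eq_mul_of_prod_eq_one (fun i => (s i : ℂ))
    (by exact_mod_cast hprod)
  have hs' : ∀ i, (s i : ℂ) * s i = 1 := fun i => by exact_mod_cast hs i
  have heig : (cycA k J s).map ((↑) : ℝ → ℂ) *ᵥ v = ((J - 2 : ℝ) : ℂ) • v := by
    funext i
    rw [cycA_map_mulVec_apply, hv, Pi.smul_apply, smul_eq_mul]
    push_cast
    linear_combination (J : ℂ) * v i * hs' i
  refine Module.End.hasEigenvalue_of_hasEigenvector (x := v) ⟨?_, fun h => ?_⟩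
  · rw [Module.End.mem_eigenspace_iff, toLin'_apply, heig]
  · simpa [hv0] using congrFun h 0

end

/-- Non-frustrated case `∏ s_i = 1`: if `J < 2` every eigenvalue of `A` has
strictly negative real part; if `J > 2` then `J − 2` is a real eigenvalue with
strictly positive real part.  Stability is lost at `J_c = 2` through a real
eigenvalue crossing zero. -/
theorem statement12 (k : ℕ) [NeZero k] (hk : 2 ≤ k) (J : ℝ) (hJ : 0 < J)
    (s : ZMod k → ℝ) (hs : ∀ i, s i = 1 ∨ s i = -1)
    (hprod : ∏ i : ZMod k, s i = 1) :
    (J < 2 →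
      ∀ z : ℂ,
        Module.End.HasEigenvalue
          (Matrix.toLin' ((cycA k J s).map (fun a => (a : ℂ)))) z →
        z.re < 0) ∧
    (2 < J →
      Module.End.HasEigenvalue
        (Matrix.toLin' ((cycA k J s).map (fun a => (a : ℂ))))
        (((J - 2 : ℝ) : ℂ)) ∧
      (0 : ℝ) < J - 2) := by
  have : Fact (1 < k) := ⟨hk⟩
  refine ⟨fun hJ2 z hz => ?_, fun hJ2 => ⟨?_, by linarith⟩⟩
  · have hdisc := norm_add_two_le_of_hasEigenvalue_cycA hJ.le
      (fun i => by rcases hs i with h | h <;> simp [h]) hz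
    have hre : (z + 2).re ≤ ‖z + 2‖ := Complex.re_le_norm _
    rw [Complex.add_re, Complex.re_ofNat] at hre
    linarith
  · exact hasEigenvalue_cycA_sub_two (fun i => by rcases hs i with h | h <;> simp [h]) hprod
end

section
/- Let k ≥ 3 and s : ZMod k → {−1,+1} with ∏_i s_i = −1, and set J = 2/cos(π/k). Then the purely imaginary number 2 i tan(π/k) is an eigenvalue of the k × k real matrix A with A_{ii} = −2, A_{i,c(i)} = s_i J (c(i) = i+1 mod k) and all other entries 0; this eigenvalue is nonzero and purely imaginary, and its complex conjugate −2 i tan(π/k) is also an eigenvalue. -/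
open Finset Complex Matrix

section CyclicShift

variable {K : Type*} [Field K] {k : ℕ}

noncomputable def cyclicShiftEigenvector (w : ZMod k → K) (ζ : K) (i : ZMod k) : K :=
  ζ ^ i.val / ∏ j ∈ range i.val, w j

theorem cyclicShiftEigenvector_zero (w : ZMod k → K) (ζ : K) :
    cyclicShiftEigenvector w ζ 0 = 1 := by
  simp [cyclicShiftEigenvector]

variable [NeZero k]

theorem ZMod.prod_eq_prod_range {M : Type*} [CommMonoid M] (f : ZMod k → M) :
    ∏ i, f i = ∏ j ∈ range k, f j := by
  refine prod_nbij' ZMod.val Nat.cast ?_ ?_ ?_ ?_ ?_ <;>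
    simp +contextual [ZMod.val_lt, Nat.mod_eq_of_lt]

variable {w : ZMod k → K} {ζ : K}

theorem mul_cyclicShiftEigenvector_add_one (hw : ∏ i, w i = ζ ^ k) (hζ : ζ ≠ 0) (i : ZMod k) :
    w i * cyclicShiftEigenvector w ζ (i + 1) = ζ * cyclicShiftEigenvector w ζ i := by
  have hw0 : ∀ j, w j ≠ 0 := fun j =>
    prod_ne_zero_iff.mp (hw ▸ pow_ne_zero k hζ) j (mem_univ j)
  have hP : ∏ j ∈ range i.val, w j ≠ 0 := prod_ne_zero_iff.mpr fun j _ => hw0 j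
  have hsucc : i + 1 = ((i.val + 1 : ℕ) : ZMod k) := by
    push_cast [ZMod.natCast_zmod_val]; rfl
  have hprefix : ∏ j ∈ range (i.val + 1), w j = (∏ j ∈ range i.val, w j) * w i := by
    rw [prod_range_succ, ZMod.natCast_zmod_val]
  rcases (show i.val + 1 ≤ k from ZMod.val_lt i).lt_or_eq with hlt | heq
  · rw [cyclicShiftEigenvector, hsucc, ZMod.val_cast_of_lt hlt, hprefix, cyclicShiftEigenvector]
    have := hw0 i
    field_simp
    ring
  · rw [hsucc, heq, ZMod.natCast_self, cyclicShiftEigenvector_zero, cyclicShiftEigenvector]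
    rw [ZMod.prod_eq_prod_range, show range k = range (i.val + 1) by rw [heq], hprefix] at hw
    field_simp
    rw [← pow_succ', heq, ← hw]
    ring

theorem hasEigenvalue_of_mulVec_eq_add_shift (M : Matrix (ZMod k) (ZMod k) K) (a : K)
    (hM : ∀ v i, (M *ᵥ v) i = a * v i + w i * v (i + 1)) (hw : ∏ i, w i = ζ ^ k)
    (hζ : ζ ≠ 0) : Module.End.HasEigenvalue (Matrix.toLin' M) (a + ζ) := by
  refine Module.End.hasEigenvalue_of_hasEigenvector
    (x := cyclicShiftEigenvector w ζ) ⟨?_, fun h => ?_⟩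
  · rw [Module.End.mem_eigenspace_iff, Matrix.toLin'_apply]
    ext i
    rw [hM, mul_cyclicShiftEigenvector_add_one hw hζ, Pi.smul_apply, smul_eq_mul]
    ring
  · simpa [cyclicShiftEigenvector_zero] using congrFun h 0

end CyclicShift

section CycA

variable {k : ℕ} [NeZero k]

theorem cycA_map_mulVec (hk : 1 < k) (J : ℝ) (s : ZMod k → ℝ) (v : ZMod k → ℂ) (i : ZMod k) :
    ((cycA k J s).map (fun a => (a : ℂ)) *ᵥ v) i = -2 * v i + ((s i * J : ℝ) : ℂ) * v (i + 1) := by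
  have : Fact (1 < k) := ⟨hk⟩
  have hi : i ≠ i + 1 := fun h => one_ne_zero (left_eq_add.mp h)
  rw [Matrix.mulVec, dotProduct, Fintype.sum_eq_add i (i + 1) hi]
  · simp [cycA, hi.symm]
  · rintro j ⟨h1, h2⟩
    simp [cycA, h1, h2]

theorem cycA_hasEigenvalue (hk : 1 < k) {J : ℝ} (hJ : J ≠ 0) {s : ZMod k → ℝ}
    (hprod : ∏ i, s i = -1) {ζ : ℂ} (hζ : ζ ^ k = -1) :
    Module.End.HasEigenvalue (Matrix.toLin' ((cycA k J s).map (fun a => (a : ℂ))))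
      (J * ζ - 2) := by
  rw [sub_eq_neg_add]
  refine hasEigenvalue_of_mulVec_eq_add_shift _ _ (cycA_map_mulVec hk J s) ?_ ?_
  · push_cast
    rw [prod_mul_distrib, prod_const, card_univ, ZMod.card, ← ofReal_prod, hprod, mul_pow, hζ]
    push_cast
    ring
  · refine mul_ne_zero (ofReal_ne_zero.mpr hJ) ?_
    rintro rfl
    simp [zero_pow (NeZero.ne k)] at hζ

end CycA

theorem two_div_cos_mul_exp_sub_two {θ : ℝ} (h : Real.cos θ ≠ 0) :
    ((2 / Real.cos θ : ℝ) : ℂ) * exp (θ * I) - 2 = I * (2 * Real.tan θ) := by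
  have hc : (Real.cos θ : ℂ) ≠ 0 := ofReal_ne_zero.mpr h
  rw [exp_mul_I, ← ofReal_cos, ← ofReal_sin, Real.tan_eq_sin_div_cos, ofReal_div, ofReal_div,
    ofReal_ofNat]
  field_simp
  ring

theorem statement14_general (k : ℕ) [NeZero k] (hk : 3 ≤ k)
    (s : ZMod k → ℝ)
    (hprod : ∏ i : ZMod k, s i = -1) :
    Module.End.HasEigenvalue
      (Matrix.toLin'
        ((cycA k (2 / Real.cos (Real.pi / k)) s).map (fun a => (a : ℂ))))
      (Complex.I * (2 * Real.tan (Real.pi / k))) ∧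
    Complex.I * (2 * Real.tan (Real.pi / k)) ≠ 0 ∧
    (Complex.I * (2 * Real.tan (Real.pi / k))).re = 0 ∧
    Module.End.HasEigenvalue
      (Matrix.toLin'
        ((cycA k (2 / Real.cos (Real.pi / k)) s).map (fun a => (a : ℂ))))
      (-(Complex.I * (2 * Real.tan (Real.pi / k)))) := by
  set θ := Real.pi / k with hθ
  have hθpos : 0 < θ := by positivity
  have hθlt : θ < Real.pi / 2 :=
    div_lt_div_of_pos_left Real.pi_pos two_pos (by exact_mod_cast (by omega : 2 < k))
  have hcos : Real.cos θ ≠ 0 := (Real.cos_pos_of_mem_Ioo ⟨by linarith, hθlt⟩).ne'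
  have hJ : 2 / Real.cos θ ≠ 0 := div_ne_zero two_ne_zero hcos
  have hkθ : (k : ℂ) * (θ * I) = Real.pi * I := by
    have : (k : ℂ) ≠ 0 := Nat.cast_ne_zero.mpr (NeZero.ne k)
    rw [hθ]
    push_cast
    field_simp
  have hζ : exp (θ * I) ^ k = -1 := by rw [← exp_nat_mul, hkθ, exp_pi_mul_I]
  have hζ' : exp ((-θ : ℝ) * I) ^ k = -1 := by
    rw [ofReal_neg, neg_mul, Complex.exp_neg, inv_pow, hζ, inv_neg_one]
  have hconj : ((2 / Real.cos θ : ℝ) : ℂ) * exp ((-θ : ℝ) * I) - 2 = -(I * (2 * Real.tan θ)) := by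
    rw [← Real.cos_neg θ, two_div_cos_mul_exp_sub_two (by rwa [Real.cos_neg]), Real.tan_neg]
    push_cast
    ring
  refine ⟨?_, ?_, by simp, ?_⟩
  · rw [← two_div_cos_mul_exp_sub_two hcos]
    exact cycA_hasEigenvalue (by omega) hJ hprod hζ
  · exact mul_ne_zero I_ne_zero (mul_ne_zero two_ne_zero
      (ofReal_ne_zero.mpr (Real.tan_pos_of_pos_of_lt_pi_div_two hθpos hθlt).ne'))
  · rw [← hconj]
    exact cycA_hasEigenvalue (by omega) hJ hprod hζ'

/-- At the critical coupling `J = 2/cos(π/k)` of the frustrated model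
(`∏ s_i = −1`, `k ≥ 3`), the purely imaginary number `2 i tan(π/k)` is a
nonzero eigenvalue of `A`, and so is its complex conjugate `−2 i tan(π/k)`. -/
theorem statement14 (k : ℕ) [NeZero k] (hk : 3 ≤ k)
    (s : ZMod k → ℝ) (hs : ∀ i, s i = 1 ∨ s i = -1)
    (hprod : ∏ i : ZMod k, s i = -1) :
    Module.End.HasEigenvalue
      (Matrix.toLin'
        ((cycA k (2 / Real.cos (Real.pi / k)) s).map (fun a => (a : ℂ))))
      (Complex.I * (2 * Real.tan (Real.pi / k))) ∧
    Complex.I * (2 * Real.tan (Real.pi / k)) ≠ 0 ∧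
    (Complex.I * (2 * Real.tan (Real.pi / k))).re = 0 ∧
    Module.End.HasEigenvalue
      (Matrix.toLin'
        ((cycA k (2 / Real.cos (Real.pi / k)) s).map (fun a => (a : ℂ))))
      (-(Complex.I * (2 * Real.tan (Real.pi / k)))) :=
  statement14_general k hk s hprod
end

section
/- For every real J > 2 there exists y* with 0 < y* < 1/2 such that the set of real solutions of the equation 2y = tanh(J y) is exactly {−y*, 0, y*}. -/
/-!
Substituting `x = J y`, the positive solutions are the positive roots of `tanh x / x = 2 / J`.
Since `tanh` is strictly concave on `[0, ∞)` and vanishes at `0`, its secant slope `tanh x / x`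
is strictly decreasing there; it tends to `tanh' 0 = 1 > 2 / J` as `x → 0⁺` and drops below
`2 / J` at `x = J / 2` because `tanh < 1`. So there is exactly one positive root, and oddness of
`tanh` reflects it to the unique negative one.
-/

open Real Set Filter Topology

namespace Real

theorem hasDerivAt_tanh (x : ℝ) : HasDerivAt tanh (1 / cosh x ^ 2) x := by
  have h := (hasDerivAt_sinh x).div (hasDerivAt_cosh x) (cosh_pos x).ne'
  rw [show cosh x * cosh x - sinh x * sinh x = 1 by linear_combination cosh_sq_sub_sinh_sq x] at h
  exact (funext tanh_eq_sinh_div_cosh).symm ▸ h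

theorem continuous_tanh : Continuous tanh :=
  continuous_iff_continuousAt.2 fun x => (hasDerivAt_tanh x).continuousAt

theorem strictConcaveOn_tanh : StrictConcaveOn ℝ (Ici 0) tanh := by
  apply StrictAntiOn.strictConcaveOn_of_deriv (convex_Ici 0) continuous_tanh.continuousOn
  rw [interior_Ici]
  intro a (ha : 0 < a) b (hb : 0 < b) hab
  simp only [(hasDerivAt_tanh _).deriv]
  have hcosh : cosh a < cosh b := cosh_lt_cosh.2 (by rwa [abs_of_pos ha, abs_of_pos hb])
  gcongr

theorem strictAntiOn_tanh_div_self : StrictAntiOn (fun x => tanh x / x) (Ioi 0) := by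
  intro x (hx : 0 < x) y (hy : 0 < y) hxy
  simpa using strictConcaveOn_tanh.secant_strict_mono self_mem_Ici hx.le hy.le hx.ne' hy.ne' hxy

theorem tendsto_tanh_div_self : Tendsto (fun x => tanh x / x) (𝓝[>] 0) (𝓝 1) := by
  simpa [div_eq_inv_mul] using (hasDerivAt_tanh 0).tendsto_slope_zero_right

theorem exists_tanh_div_self_eq {c : ℝ} (hc0 : 0 < c) (hc1 : c < 1) :
    ∃ x, 0 < x ∧ x < c⁻¹ ∧ tanh x / x = c := by
  obtain ⟨a, ⟨hca, hac⟩, ha0 : 0 < a⟩ :=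
    (((tendsto_order.1 tendsto_tanh_div_self).1 c hc1).and
      ((tendsto_nhdsWithin_of_tendsto_nhds tendsto_id).eventually
        (eventually_lt_nhds (inv_pos.2 hc0))) |>.and self_mem_nhdsWithin).exists
  have hend : tanh c⁻¹ / c⁻¹ < c := by
    rw [div_inv_eq_mul]
    exact mul_lt_of_lt_one_left hc0 (tanh_lt_one _)
  have hcont : ContinuousOn (fun x => tanh x / x) (Icc a c⁻¹) :=
    continuous_tanh.continuousOn.div continuousOn_id fun x hx => (ha0.trans_le hx.1).ne'
  obtain ⟨x, ⟨hax, hxc⟩, hx⟩ := intermediate_value_Icc' hac.le hcont ⟨hend.le, hca.le⟩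
  refine ⟨x, ha0.trans_le hax, hxc.lt_of_ne ?_, hx⟩
  rintro rfl
  exact hend.ne hx

end Real

theorem Set.eq_neg_zero_pos_of_forall_pos {S : Set ℝ} (hneg : ∀ y ∈ S, -y ∈ S) (h0 : (0 : ℝ) ∈ S)
    {a : ℝ} (ha : 0 < a) (hpos : ∀ y, 0 < y → (y ∈ S ↔ y = a)) : S = {-a, 0, a} := by
  ext y
  simp only [mem_insert_iff, mem_singleton_iff]
  rcases lt_trichotomy y 0 with hy | rfl | hy
  · have : y ∈ S ↔ -y ∈ S := ⟨hneg y, fun h => neg_neg y ▸ hneg _ h⟩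
    rw [this, hpos (-y) (neg_pos.2 hy)]
    exact ⟨fun h => .inl (by linarith), by rintro (h | h | h) <;> linarith⟩
  · simp [h0]
  · rw [hpos y hy]
    exact ⟨fun h => .inr (.inr h), by rintro (h | h | h) <;> linarith⟩

/-- For `J > 2`, the Curie–Weiss equation `2y = tanh(J y)` has exactly three
real solutions `{−y*, 0, y*}` with `0 < y* < 1/2`. -/
theorem statement16 (J : ℝ) (hJ : 2 < J) :
    ∃ ys : ℝ, 0 < ys ∧ ys < 1 / 2 ∧
      {y : ℝ | 2 * y = Real.tanh (J * y)} = {-ys, 0, ys} := by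
  have hJ0 : 0 < J := by linarith
  obtain ⟨x, hx0, hxJ, hx⟩ :=
    exists_tanh_div_self_eq (c := 2 / J) (by positivity) ((div_lt_one hJ0).2 hJ)
  have hxJ' : x < J / 2 := by rwa [inv_div] at hxJ
  refine ⟨x / J, by positivity, by rw [div_lt_iff₀ hJ0]; linarith, ?_⟩
  apply Set.eq_neg_zero_pos_of_forall_pos
  · intro y (hy : 2 * y = tanh (J * y))
    change 2 * -y = tanh (J * -y)
    rw [mul_neg, mul_neg, tanh_neg, hy]
  · simp
  · positivity
  · intro y hy
    have hJy : 0 < J * y := by positivity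
    have hsol : 2 * y = tanh (J * y) ↔ tanh (J * y) / (J * y) = 2 / J := by
      rw [div_eq_div_iff hJy.ne' hJ0.ne', eq_comm]
      constructor <;> intro h <;> nlinarith
    rw [mem_ofPred_eq, hsol, ← hx, strictAntiOn_tanh_div_self.injOn.eq_iff hJy hx0,
      eq_div_iff hJ0.ne', mul_comm]
end
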